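/- Let K ≥ 2 and M = (Fin K → Bool). The constant vector 1 (all-ones over M) lies in the span of the signal vectors of any single action (i,j) (since S⁻+S⁰+S⁺ = 1), and therefore for any two actions a, b, the gain difference g_a − g_b lies in the span of the signal vectors of the actions {(i,i') , (j,j')} for appropriate arms, using only the decomposition g_{(i,j)} − g_{(i',j')} = (1/2)(S⁺_{jj'} − S⁻_{jj'}) + (1/2)(S⁺_{ii'} − S⁻_{ii'}). -/
import Mathlib


noncomputable def gain {K : ℕ} (a b : Fin K) (m : Fin K → Bool) : ℝ :=
  ((if m a then (1:ℝ) else 0) + (if m b then (1:ℝ) else 0)) / 2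

def Splus {K : ℕ} (a b : Fin K) (m : Fin K → Bool) : ℝ := if m a > m b then 1 else 0
def Sminus {K : ℕ} (a b : Fin K) (m : Fin K → Bool) : ℝ := if m a < m b then 1 else 0
def Szero {K : ℕ} (a b : Fin K) (m : Fin K → Bool) : ℝ := if m a = m b then 1 else 0

theorem ones_and_gain_diff_in_signal_span {K : ℕ} (hK : 2 ≤ K) :
    (∀ i j : Fin K,
      (fun _ : Fin K → Bool => (1:ℝ)) ∈
        Submodule.span ℝ ({Sminus i j, Szero i j, Splus i j} :
          Set ((Fin K → Bool) → ℝ))) ∧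
    (∀ i j i' j' : Fin K,
      (fun m : Fin K → Bool => gain i j m - gain i' j' m) ∈
        Submodule.span ℝ
          ({Sminus i i', Szero i i', Splus i i',
            Sminus j j', Szero j j', Splus j j'} :
            Set ((Fin K → Bool) → ℝ))) := by
  constructor
  · intro i j
    have h : (fun _ : Fin K → Bool => (1:ℝ)) =
        Sminus i j + Szero i j + Splus i j := by
      funext m
      simp only [Sminus, Szero, Splus, Pi.add_apply]
      cases hi : m i <;> cases hj : m j <;> norm_num
    rw [h]
    exact add_mem (add_mem (Submodule.subset_span (by simp))
      (Submodule.subset_span (by simp))) (Submodule.subset_span (by simp))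
  · intro i j i' j'
    have h : (fun m : Fin K → Bool => gain i j m - gain i' j' m) =
        (1/2:ℝ) • (Splus i i' : (Fin K → Bool) → ℝ) + (-(1/2):ℝ) • Sminus i i'
          + (1/2:ℝ) • Splus j j' + (-(1/2):ℝ) • Sminus j j' := by
      funext m
      simp only [gain, Splus, Sminus, Pi.add_apply, Pi.smul_apply, smul_eq_mul]
      cases hi : m i <;> cases hj : m j <;> cases hi' : m i' <;> cases hj' : m j' <;>
        norm_num [show ¬ (true < false) from by decide, show (false < true) from by decide]
    rw [h]
    refine add_mem (add_mem (add_mem ?_ ?_) ?_) ?_ <;>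
      exact Submodule.smul_mem _ _ (Submodule.subset_span (by simp))
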